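/- arXiv:2405.00614 — 4 statements merged into one kernel-verified Lean document; each statement's English description precedes it below -/
import Mathlib

section
/- Let S = ((x_1,y_1),…,(x_n,y_n)) and S' = ((x'_1,y'_1),…,(x'_m,y'_m)) be datasets in X × {0,1}, let 𝒞 be a collection of subsets of X, and let p, p' be predictors such that p is (𝒞, ε)-multiaccurate with respect to Uni(S) and p' is (𝒞, ε')-multiaccurate with respect to Uni(S'). Then for every C ∈ 𝒞: |E_{(x,y)∼Uni(S)}[(p'(x) − p(x))·1[x ∈ C]]| ≤ (1/n)·|Σ_{i=1}^n y_i·1[x_i ∈ C] − Σ_{j=1}^m y'_j·1[x'_j ∈ C]| + (1/n)·|(S Δ_X S') ∩ C| + ε + (m/n)·ε'. -/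
open Finset
open scoped BigOperators Classical

noncomputable section

variable {X : Type*}

/-- The real value of a Boolean label. -/
def bval (y : Bool) : ℝ := if y then 1 else 0

/-- The real-valued indicator of a set `C ⊆ X`. -/
def ind (C : Set X) (x : X) : ℝ := if x ∈ C then 1 else 0

/-- `D` is a probability mass function on a finite type. -/
def IsDist {α : Type*} [Fintype α] (D : α → ℝ) : Prop :=
  (∀ a, 0 ≤ D a) ∧ ∑ a, D a = 1

/-- The multiaccuracy error `MA-err_D(p, C) = E_{(x,y)∼D}[(y − p(x))·1[x ∈ C]]`. -/
def MAerr [Fintype X] (D : X × Bool → ℝ) (p : X → ℝ) (C : Set X) : ℝ :=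
  ∑ z : X × Bool, D z * ((bval z.2 - p z.1) * ind C z.1)

/-- The `X`-marginal of a distribution on `X × Bool`. -/
def marg [Fintype X] (D : X × Bool → ℝ) (x : X) : ℝ := ∑ y : Bool, D (x, y)

/-- The statistical distance between two distributions on `X`, restricted to `C`:
`Δ_C(DX, DX') = Σ_{x ∈ C} |DX x − DX' x|`. -/
def statDist [Fintype X] (DX DX' : X → ℝ) (C : Set X) : ℝ :=
  ∑ x : X, ind C x * |DX x - DX' x|

/-- The probability, over `n` i.i.d. draws from `D`, of the event `E`. -/
def iidProb {α : Type*} [Fintype α] (D : α → ℝ) (n : ℕ)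
    (E : (Fin n → α) → Prop) : ℝ :=
  ∑ s : Fin n → α, if E s then ∏ i, D (s i) else 0

/-- The multiplicity `μ_S(x)` of the point `x` among the `x`-values of the dataset `S`. -/
def mult {n : ℕ} (S : Fin n → X × Bool) (x : X) : ℕ :=
  (univ.filter fun i => (S i).1 = x).card

/-- `|(S Δ_X S') ∩ C| = Σ_{x ∈ C} |μ_S(x) − μ_{S'}(x)|`, the size of the multiset
symmetric difference of the `x`-values of `S` and `S'`, restricted to `C`. -/
def symmDiffC [Fintype X] {n m : ℕ} (S : Fin n → X × Bool) (S' : Fin m → X × Bool)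
    (C : Set X) : ℝ :=
  ∑ x : X, ind C x * |(mult S x : ℝ) - (mult S' x : ℝ)|

/- The difference `Σ_S (p' − p)·1_C` splits exactly into four terms: the `p`-residual on `S`, the
change of `Σ p'·1_C` from `S` to `S'`, the change of the label sums, and the `p'`-residual on `S'`.
The residuals are controlled by the two multiaccuracy hypotheses; since `p'` takes values in
`[0, 1]`, the change of `Σ p'·1_C` is at most the multiset symmetric difference of the `x`-values
inside `C`. -/

lemma ind_nonneg (C : Set X) (x : X) : 0 ≤ ind C x := by
  unfold ind; split_ifs <;> norm_num

lemma abs_mul_ind_le {a : ℝ} (ha : |a| ≤ 1) (C : Set X) (x : X) : |a * ind C x| ≤ ind C x := by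
  rw [abs_mul, abs_of_nonneg (ind_nonneg C x)]
  exact mul_le_of_le_one_left (ind_nonneg C x) ha

lemma sum_comp_fst_eq_sum_mult [Fintype X] {k : ℕ} (T : Fin k → X × Bool) (g : X → ℝ) :
    ∑ i, g (T i).1 = ∑ x, (mult T x : ℝ) * g x := by
  rw [← sum_fiberwise univ (fun i => (T i).1)]
  refine sum_congr rfl fun x _ => ?_
  rw [sum_congr rfl fun i hi => congrArg g (mem_filter.mp hi).2, sum_const, nsmul_eq_mul, mult]

lemma abs_sum_sub_sum_le_symmDiffC [Fintype X] {n m : ℕ} (S : Fin n → X × Bool)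
    (S' : Fin m → X × Bool) (C : Set X) {f : X → ℝ} (hf : ∀ x, |f x| ≤ 1) :
    |∑ i, f (S i).1 * ind C (S i).1 - ∑ j, f (S' j).1 * ind C (S' j).1| ≤ symmDiffC S S' C := by
  rw [sum_comp_fst_eq_sum_mult S fun x => f x * ind C x,
    sum_comp_fst_eq_sum_mult S' fun x => f x * ind C x, ← sum_sub_distrib]
  refine (abs_sum_le_sum_abs _ _).trans (sum_le_sum fun x _ => ?_)
  rw [← sub_mul, abs_mul, mul_comm]
  exact mul_le_mul_of_nonneg_right (abs_mul_ind_le (hf x) C x) (abs_nonneg _)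

lemma abs_sum_le_card_mul_of_abs_mean_le {k : ℕ} {f : Fin k → ℝ} {ε : ℝ}
    (h : |(1 / (k : ℝ)) * ∑ i, f i| ≤ ε) : |∑ i, f i| ≤ k * ε := by
  rcases k.eq_zero_or_pos with rfl | hk
  · simp
  · have hk' : (0 : ℝ) < k := Nat.cast_pos.mpr hk
    rw [abs_mul, abs_of_pos (one_div_pos.mpr hk'), one_div_mul_eq_div, div_le_iff₀ hk'] at h
    linarith

theorem stmt_4_general [Fintype X]
    {n m : ℕ}
    (S : Fin n → X × Bool) (S' : Fin m → X × Bool)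
    (𝒞 : Set (Set X)) (ε ε' : ℝ)
    (p p' : X → ℝ)
    (hp'01 : ∀ x, p' x ∈ Set.Icc (0 : ℝ) 1)
    (hpMA : ∀ C ∈ 𝒞,
      |(1 / (n : ℝ)) * ∑ i, (bval (S i).2 - p (S i).1) * ind C (S i).1| ≤ ε)
    (hp'MA : ∀ C ∈ 𝒞,
      |(1 / (m : ℝ)) * ∑ j, (bval (S' j).2 - p' (S' j).1) * ind C (S' j).1| ≤ ε') :
    ∀ C ∈ 𝒞,
      |(1 / (n : ℝ)) * ∑ i, (p' (S i).1 - p (S i).1) * ind C (S i).1| ≤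
        (1 / (n : ℝ)) *
            |∑ i, bval (S i).2 * ind C (S i).1 - ∑ j, bval (S' j).2 * ind C (S' j).1|
          + (1 / (n : ℝ)) * symmDiffC S S' C + ε + ((m : ℝ) / (n : ℝ)) * ε' := by
  intro C hC
  set A := ∑ i, (bval (S i).2 - p (S i).1) * ind C (S i).1
  set A' := ∑ j, (bval (S' j).2 - p' (S' j).1) * ind C (S' j).1
  set B := ∑ i, p' (S i).1 * ind C (S i).1 - ∑ j, p' (S' j).1 * ind C (S' j).1
  set Y := ∑ i, bval (S i).2 * ind C (S i).1 - ∑ j, bval (S' j).2 * ind C (S' j).1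
  have hsplit : ∑ i, (p' (S i).1 - p (S i).1) * ind C (S i).1 = A + B - Y - A' := by
    simp only [A, A', B, Y, sub_mul, sum_sub_distrib]
    ring
  have hn : (0 : ℝ) ≤ 1 / n := by positivity
  have hA : 1 / n * |A| ≤ ε := by simpa only [abs_mul, abs_of_nonneg hn] using hpMA C hC
  have hA' : |A'| ≤ m * ε' := abs_sum_le_card_mul_of_abs_mean_le (hp'MA C hC)
  have hB : |B| ≤ symmDiffC S S' C :=
    abs_sum_sub_sum_le_symmDiffC S S' C fun x => abs_le.mpr
      ⟨by linarith [(hp'01 x).1], (hp'01 x).2⟩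
  calc |1 / (n : ℝ) * ∑ i, (p' (S i).1 - p (S i).1) * ind C (S i).1|
      = 1 / n * |A + B - Y - A'| := by rw [hsplit, abs_mul, abs_of_nonneg hn]
    _ ≤ 1 / n * (|Y| + |B| + |A| + |A'|) := by
        gcongr
        linarith [abs_sub (A + B - Y) A', abs_sub (A + B) Y, abs_add_le A B]
    _ ≤ 1 / n * (|Y| + symmDiffC S S' C + |A| + m * ε') := by gcongr
    _ ≤ _ := by
        rw [div_eq_mul_one_div (m : ℝ)]
        linarith

/-- Pointwise robustness from empirical MA.
If `p` is `(𝒞, ε)`-MA w.r.t. `Uni(S)` and `p'` is `(𝒞, ε')`-MA w.r.t. `Uni(S')`, then for every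
`C ∈ 𝒞`:
`|E_{(x,y)∼Uni(S)}[(p'(x) − p(x))·1[x ∈ C]]|
  ≤ (1/n)·|Σᵢ yᵢ·1[xᵢ ∈ C] − Σⱼ y'ⱼ·1[x'ⱼ ∈ C]| + (1/n)·|(S Δ_X S') ∩ C| + ε + (m/n)·ε'`. -/
theorem stmt_4 [Fintype X] [Nonempty X]
    {n m : ℕ} (hn : 0 < n) (hm : 0 < m)
    (S : Fin n → X × Bool) (S' : Fin m → X × Bool)
    (𝒞 : Set (Set X)) (ε ε' : ℝ)
    (p p' : X → ℝ)
    (hp01 : ∀ x, p x ∈ Set.Icc (0 : ℝ) 1) (hp'01 : ∀ x, p' x ∈ Set.Icc (0 : ℝ) 1)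
    (hpMA : ∀ C ∈ 𝒞,
      |(1 / (n : ℝ)) * ∑ i, (bval (S i).2 - p (S i).1) * ind C (S i).1| ≤ ε)
    (hp'MA : ∀ C ∈ 𝒞,
      |(1 / (m : ℝ)) * ∑ j, (bval (S' j).2 - p' (S' j).1) * ind C (S' j).1| ≤ ε') :
    ∀ C ∈ 𝒞,
      |(1 / (n : ℝ)) * ∑ i, (p' (S i).1 - p (S i).1) * ind C (S i).1| ≤
        (1 / (n : ℝ)) *
            |∑ i, bval (S i).2 * ind C (S i).1 - ∑ j, bval (S' j).2 * ind C (S' j).1|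
          + (1 / (n : ℝ)) * symmDiffC S S' C + ε + ((m : ℝ) / (n : ℝ)) * ε' :=
  stmt_4_general S S' 𝒞 ε ε' p p' hp'01 hpMA hp'MA
end
end

section
/- Let 𝒜 be a deterministic learning algorithm whose outputs all lie in a family of predictors 𝒫 ⊆ [0,1]^X, and let 𝒞 be a collection of subsets of X. Suppose 𝒜 is (𝒞, ε₁)-empirically multiaccurate and 𝒫 satisfies (𝒞, n, ε₂, δ₂)-uniform convergence. Then 𝒜 is a (𝒞, n, ε₁ + 2ε₂, δ₂)-multiaccurate learning algorithm: for every distribution D on X × {0,1}, with probability at least 1 − δ₂ over n i.i.d. draws S = ((x_1,y_1),…,(x_n,y_n)) from D, the predictor p = 𝒜(S) satisfies |E_{(x,y)∼D}[(y − p(x))·1[x ∈ C]]| ≤ ε₁ + 2ε₂ for every C ∈ 𝒞. -/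
open Finset
open scoped BigOperators Classical

noncomputable section

variable {X : Type*}

/-- `𝒜` is `(𝒞, ε)`-empirically multiaccurate: for every `k` and every dataset `S` of size `k`,
the predictor `𝒜(S)` satisfies `|(1/k)·Σᵢ (yᵢ − p(xᵢ))·1[xᵢ ∈ C]| ≤ ε` for all `C ∈ 𝒞`. -/
def EmpMA (A : ∀ k, (Fin k → X × Bool) → X → ℝ) (𝒞 : Set (Set X)) (ε : ℝ) : Prop :=
  ∀ (k : ℕ), 0 < k → ∀ S : Fin k → X × Bool, ∀ C ∈ 𝒞,
    |(1 / (k : ℝ)) * ∑ i, (bval (S i).2 - A k S (S i).1) * ind C (S i).1| ≤ ε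

/-- The family of predictors `𝓟` satisfies `(𝒞, n, ε, δ)`-uniform convergence: for every
distribution `D` on `X × {0,1}`, with probability at least `1 − δ` over `n` i.i.d. draws from
`D`, for all `p ∈ 𝓟` and `C ∈ 𝒞` the empirical averages of `p(x)·1[x ∈ C]` and `y·1[x ∈ C]`
are within `ε` of their expectations. -/
def UnifConv [Fintype X] (𝓟 : Set (X → ℝ)) (𝒞 : Set (Set X)) (n : ℕ) (ε δ : ℝ) : Prop :=
  ∀ D : X × Bool → ℝ, IsDist D →
    1 - δ ≤ iidProb D n (fun s => ∀ p ∈ 𝓟, ∀ C ∈ 𝒞,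
      |(1 / (n : ℝ)) * ∑ i, p (s i).1 * ind C (s i).1
          - ∑ z : X × Bool, D z * (p z.1 * ind C z.1)| ≤ ε ∧
      |(1 / (n : ℝ)) * ∑ i, bval (s i).2 * ind C (s i).1
          - ∑ z : X × Bool, D z * (bval z.2 * ind C z.1)| ≤ ε)

/-! On the event where uniform convergence holds for the sample `S`, it holds in particular for
the algorithm's own output `p = 𝒜(S) ∈ 𝓟`. The true multiaccuracy error `E[y·1_C] − E[p·1_C]`
then differs from the empirical one by at most `ε₂` in each of its two terms, and the empirical
error is at most `ε₁`. -/

lemma iidProb_mono {α : Type*} [Fintype α] {D : α → ℝ} (hD : ∀ a, 0 ≤ D a) {n : ℕ}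
    {E F : (Fin n → α) → Prop} (h : ∀ s, E s → F s) :
    iidProb D n E ≤ iidProb D n F := by
  refine sum_le_sum fun s _ => ?_
  split_ifs with hE hF hF
  · exact le_rfl
  · exact absurd (h s hE) hF
  · exact prod_nonneg fun i _ => hD (s i)
  · exact le_rfl

lemma MAerr_eq_sub [Fintype X] (D : X × Bool → ℝ) (p : X → ℝ) (C : Set X) :
    MAerr D p C = ∑ z : X × Bool, D z * (bval z.2 * ind C z.1)
      - ∑ z : X × Bool, D z * (p z.1 * ind C z.1) := by
  rw [MAerr, ← sum_sub_distrib]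
  exact sum_congr rfl fun z _ => by ring

lemma mul_sum_err_eq_sub {n : ℕ} (S : Fin n → X × Bool) (p : X → ℝ) (C : Set X) (c : ℝ) :
    c * ∑ i, (bval (S i).2 - p (S i).1) * ind C (S i).1
      = c * ∑ i, bval (S i).2 * ind C (S i).1 - c * ∑ i, p (S i).1 * ind C (S i).1 := by
  rw [← mul_sub, ← sum_sub_distrib]
  congr 1
  exact sum_congr rfl fun i _ => by ring

lemma abs_sub_le_of_approx {a b a' b' ε₁ ε₂ : ℝ} (h' : |a' - b'| ≤ ε₁)
    (ha : |a' - a| ≤ ε₂) (hb : |b' - b| ≤ ε₂) : |a - b| ≤ ε₁ + 2 * ε₂ := by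
  rw [abs_le] at *
  constructor <;> linarith [h'.1, h'.2, ha.1, ha.2, hb.1, hb.2]

theorem stmt_7_general [Fintype X]
    (A : ∀ k, (Fin k → X × Bool) → X → ℝ)
    (𝓟 : Set (X → ℝ))
    (hA𝓟 : ∀ k (S : Fin k → X × Bool), A k S ∈ 𝓟)
    (𝒞 : Set (Set X)) (n : ℕ) (hn : 0 < n) (ε₁ ε₂ δ₂ : ℝ)
    (hEmp : EmpMA A 𝒞 ε₁)
    (hUC : UnifConv 𝓟 𝒞 n ε₂ δ₂) :
    ∀ D : X × Bool → ℝ, IsDist D →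
      1 - δ₂ ≤ iidProb D n (fun S => ∀ C ∈ 𝒞, |MAerr D (A n S) C| ≤ ε₁ + 2 * ε₂) := by
  intro D hD
  refine (hUC D hD).trans (iidProb_mono hD.1 fun S hS C hC => ?_)
  obtain ⟨hpred, hlabel⟩ := hS (A n S) (hA𝓟 n S) C hC
  have hemp := hEmp n hn S C hC
  rw [mul_sum_err_eq_sub] at hemp
  rw [MAerr_eq_sub]
  exact abs_sub_le_of_approx hemp hlabel hpred

/-- Empirical MA + uniform convergence ⟹ multiaccurate learning algorithm.
If `𝒜` outputs predictors in `𝓟`, is `(𝒞, ε₁)`-empirically multiaccurate, and `𝓟` satisfies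
`(𝒞, n, ε₂, δ₂)`-uniform convergence, then for every distribution `D` on `X × {0,1}`, with
probability at least `1 − δ₂` over `n` i.i.d. draws `S` from `D`, the predictor `p = 𝒜(S)`
satisfies `|E_D[(y − p(x))·1[x ∈ C]]| ≤ ε₁ + 2ε₂` for every `C ∈ 𝒞`. -/
theorem stmt_7 [Fintype X] [Nonempty X]
    (A : ∀ k, (Fin k → X × Bool) → X → ℝ)
    (𝓟 : Set (X → ℝ)) (h𝓟01 : ∀ p ∈ 𝓟, ∀ x, p x ∈ Set.Icc (0 : ℝ) 1)
    (hA𝓟 : ∀ k (S : Fin k → X × Bool), A k S ∈ 𝓟)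
    (𝒞 : Set (Set X)) (n : ℕ) (hn : 0 < n) (ε₁ ε₂ δ₂ : ℝ)
    (hEmp : EmpMA A 𝒞 ε₁)
    (hUC : UnifConv 𝓟 𝒞 n ε₂ δ₂) :
    ∀ D : X × Bool → ℝ, IsDist D →
      1 - δ₂ ≤ iidProb D n (fun S => ∀ C ∈ 𝒞, |MAerr D (A n S) C| ≤ ε₁ + 2 * ε₂) :=
  stmt_7_general A 𝓟 hA𝓟 𝒞 n hn ε₁ ε₂ δ₂ hEmp hUC
end
end

section
/- Let S = ((x_1,y_1),…,(x_n,y_n)) be a dataset in X × {0,1}, let p : X → [0,1] be a predictor, let ε > 0, and let C ⊆ X satisfy |(1/n)·Σ_{i=1}^n (p(x_i) − y_i)·1[x_i ∈ C]| > ε. Let v = sign(Σ_{i=1}^n (p(x_i) − y_i)·1[x_i ∈ C]) ∈ {−1, +1} and define p' : X → [0,1] by p'(x) = min(1, max(0, p(x) − v·ε)) for x ∈ C and p'(x) = p(x) for x ∉ C. Then ν_S(p) − ν_S(p') ≥ ε², where ν_S(q) := (1/n)·Σ_{i=1}^n (y_i − q(x_i))². -/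
open Finset
open scoped BigOperators Classical

noncomputable section

variable {X : Type*}

/-- The empirical ℓ₂ error `ν_S(q) = (1/n)·Σᵢ (yᵢ − q(xᵢ))²` of a predictor on a dataset. -/
def nuS {n : ℕ} (S : Fin n → X × Bool) (q : X → ℝ) : ℝ :=
  (1 / (n : ℝ)) * ∑ i, (bval (S i).2 - q (S i).1) ^ 2

theorem Real.sign_mul_self (r : ℝ) : Real.sign r * r = |r| := by
  rcases lt_trichotomy r 0 with h | rfl | h
  · rw [Real.sign_of_neg h, abs_of_neg h]; ring
  · simp
  · rw [Real.sign_of_pos h, abs_of_pos h]; ring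

theorem Real.sign_sq_le_one (r : ℝ) : Real.sign r ^ 2 ≤ 1 := by
  rcases Real.sign_apply_eq r with h | h | h <;> norm_num [h]

theorem sq_sub_min_max_le_sq_sub {a b y t : ℝ} (hy : y ∈ Set.Icc a b) :
    (y - min b (max a t)) ^ 2 ≤ (y - t) ^ 2 := by
  obtain ⟨hay, hyb⟩ := hy
  rcases le_total t a with hta | hat
  · rw [max_eq_left hta, min_eq_right (hay.trans hyb)]
    nlinarith
  · rw [max_eq_right hat]
    rcases le_total t b with htb | hbt
    · rw [min_eq_right htb]
    · rw [min_eq_left hbt]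
      nlinarith

theorem bval_mem_Icc (y : Bool) : bval y ∈ Set.Icc (0 : ℝ) 1 := by
  cases y <;> simp [bval]

theorem sum_ind_le_card {n : ℕ} (S : Fin n → X × Bool) (C : Set X) :
    ∑ i, ind C (S i).1 ≤ n := by
  calc ∑ i, ind C (S i).1 ≤ ∑ _i : Fin n, (1 : ℝ) :=
        Finset.sum_le_sum fun i _ => by unfold ind; split_ifs <;> norm_num
    _ = n := by simp

theorem nuS_sub_nuS {n : ℕ} (S : Fin n → X × Bool) (q q' : X → ℝ) :
    nuS S q - nuS S q' =
      (1 / (n : ℝ)) * ∑ i, ((bval (S i).2 - q (S i).1) ^ 2 - (bval (S i).2 - q' (S i).1) ^ 2) := by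
  rw [nuS, nuS, Finset.sum_sub_distrib, mul_sub]

/-- Moving `q` by `-v ε` changes the squared loss at a label `y` by exactly
`2 v ε (q - y) - v² ε²`; clamping back into `[0, 1]` can only help since `y ∈ [0, 1]`. -/
theorem sq_loss_gain_of_clamped_step {y q v ε : ℝ} (hy : y ∈ Set.Icc (0 : ℝ) 1)
    (hv : v ^ 2 ≤ 1) :
    2 * v * ε * (q - y) - ε ^ 2 ≤ (y - q) ^ 2 - (y - min 1 (max 0 (q - v * ε))) ^ 2 := by
  have hclamp := sq_sub_min_max_le_sq_sub (t := q - v * ε) hy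
  nlinarith [mul_le_mul_of_nonneg_right hv (sq_nonneg ε)]

theorem sq_loss_gain_of_boost_update {C : Set X} {p p' : X → ℝ} {v ε : ℝ}
    (hv : v ^ 2 ≤ 1)
    (hp' : ∀ x, p' x = if x ∈ C then min 1 (max 0 (p x - v * ε)) else p x)
    (x : X) (y : Bool) :
    (2 * v * ε * (p x - bval y) - ε ^ 2) * ind C x ≤
      (bval y - p x) ^ 2 - (bval y - p' x) ^ 2 := by
  by_cases hx : x ∈ C
  · simpa [hp' x, ind, hx] using sq_loss_gain_of_clamped_step (bval_mem_Icc y) hv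
  · simp [hp' x, ind, hx]

theorem stmt_9_general [Fintype X]
    {n : ℕ} (hn : 0 < n)
    (S : Fin n → X × Bool)
    (p : X → ℝ)
    (ε : ℝ) (hε : 0 < ε) (C : Set X)
    (hC : ε < |(1 / (n : ℝ)) * ∑ i, (p (S i).1 - bval (S i).2) * ind C (S i).1|)
    (v : ℝ) (hv : v = Real.sign (∑ i, (p (S i).1 - bval (S i).2) * ind C (S i).1))
    (p' : X → ℝ)
    (hp' : ∀ x, p' x = if x ∈ C then min 1 (max 0 (p x - v * ε)) else p x) :
    nuS S p - nuS S p' ≥ ε ^ 2 := by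
  set T := ∑ i, (p (S i).1 - bval (S i).2) * ind C (S i).1
  have hn' : (0 : ℝ) < n := by exact_mod_cast hn
  have hT : n * ε < |T| := by
    rwa [abs_mul, abs_of_pos (one_div_pos.mpr hn'), one_div_mul_eq_div, lt_div_iff₀ hn',
      mul_comm] at hC
  have hvT : v * T = |T| := hv ▸ Real.sign_mul_self T
  have hgain : 2 * ε * (v * T) - ε ^ 2 * ∑ i, ind C (S i).1 ≤
      ∑ i, ((bval (S i).2 - p (S i).1) ^ 2 - (bval (S i).2 - p' (S i).1) ^ 2) := by
    calc 2 * ε * (v * T) - ε ^ 2 * ∑ i, ind C (S i).1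
        = ∑ i, (2 * v * ε * (p (S i).1 - bval (S i).2) - ε ^ 2) * ind C (S i).1 := by
          simp only [T, Finset.mul_sum, ← Finset.sum_sub_distrib]
          exact Finset.sum_congr rfl fun i _ => by ring
      _ ≤ _ := Finset.sum_le_sum fun i _ =>
          sq_loss_gain_of_boost_update (hv ▸ Real.sign_sq_le_one T) hp' _ _
  have hcard := mul_le_mul_of_nonneg_left (sum_ind_le_card S C) (sq_nonneg ε)
  -- the total gain is at least `2ε|T| − ε²·n > 2nε² − nε²`
  rw [nuS_sub_nuS, ge_iff_le, one_div_mul_eq_div, le_div_iff₀ hn']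
  nlinarith

/-- Single-iteration loss decrease of the multiaccuracy-boost update.
If `|(1/n)·Σᵢ (p(xᵢ) − yᵢ)·1[xᵢ ∈ C]| > ε`, `v = sign(Σᵢ (p(xᵢ) − yᵢ)·1[xᵢ ∈ C])`, and
`p'(x) = clamp₀¹(p(x) − v·ε)` on `C` and `p'(x) = p(x)` off `C`, then
`ν_S(p) − ν_S(p') ≥ ε²`. -/
theorem stmt_9 [Fintype X] [Nonempty X]
    {n : ℕ} (hn : 0 < n)
    (S : Fin n → X × Bool)
    (p : X → ℝ) (hp01 : ∀ x, p x ∈ Set.Icc (0 : ℝ) 1)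
    (ε : ℝ) (hε : 0 < ε) (C : Set X)
    (hC : ε < |(1 / (n : ℝ)) * ∑ i, (p (S i).1 - bval (S i).2) * ind C (S i).1|)
    (v : ℝ) (hv : v = Real.sign (∑ i, (p (S i).1 - bval (S i).2) * ind C (S i).1))
    (p' : X → ℝ)
    (hp' : ∀ x, p' x = if x ∈ C then min 1 (max 0 (p x - v * ε)) else p x) :
    nuS S p - nuS S p' ≥ ε ^ 2 :=
  stmt_9_general hn S p ε hε C hC v hv p' hp'
end
end

section
/- Let 𝒬 ⊆ [0,1]^X be a finite family of predictors, let D be a probability distribution on X × {0,1}, let ε > 0, δ ∈ (0,1], c ≥ 0, and suppose n ≥ log(2|𝒬|/δ)/(2ε²). Then with probability at least 1 − δ over n i.i.d. draws (x_1,y_1),…,(x_n,y_n) from D, the following holds: for all p, q ∈ 𝒬, if (1/n)·Σ_{i=1}^n (y_i − q(x_i))² ≤ (1/n)·Σ_{i=1}^n (y_i − p(x_i))² − c, then E_{(x,y)∼D}[(y − q(x))²] ≤ E_{(x,y)∼D}[(y − p(x))²] + 2ε − c. In particular, applying this with c = k·ε² to the initial predictor p and the predictor p_k obtained after k iterations of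 the multiaccuracy-boost post-processing (each of which decreases the empirical squared loss by at least ε²) yields E_D[(y − p_k(x))²] ≤ E_D[(y − p(x))²] + 2ε − k·ε². -/
/-!
For each `q ∈ 𝒬` the squared loss `(y − q x)²` takes values in `[0,1]`, so by Hoeffding's
inequality its empirical sum over `n` i.i.d. draws is within `nε` of `n` times its expectation,
except with probability at most `2·exp(−2nε²)`. The bound on `n` makes the union bound over `𝒬`
at most `δ`, and on the complementary event an empirical gap of `c` between two predictors
survives in the population up to an error `2ε`.
-/

open Finset
open scoped BigOperators Classical

noncomputable section

variable {X : Type*}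

open MeasureTheory ProbabilityTheory

namespace IsDist

variable {α : Type*} [Fintype α] {D : α → ℝ}

def toPMF (hD : IsDist D) : PMF α :=
  PMF.ofFintype (fun a => ENNReal.ofReal (D a)) <| by
    rw [← ENNReal.ofReal_sum_of_nonneg fun a _ => hD.1 a, hD.2, ENNReal.ofReal_one]

lemma toReal_toPMF_apply (hD : IsDist D) (a : α) : (hD.toPMF a).toReal = D a :=
  ENNReal.toReal_ofReal (hD.1 a)

variable [MeasurableSpace α] [MeasurableSingletonClass α]

lemma integral_toMeasure (hD : IsDist D) (f : α → ℝ) :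
    ∫ a, f a ∂hD.toPMF.toMeasure = ∑ a, D a * f a := by
  simp [PMF.integral_eq_sum, toReal_toPMF_apply]

lemma iidProb_eq_measureReal_pi (hD : IsDist D) (n : ℕ) (E : (Fin n → α) → Prop) :
    iidProb D n E = (Measure.pi fun _ : Fin n => hD.toPMF.toMeasure).real {s | E s} := by
  rw [iidProb, ← Finset.sum_filter, ← Finset.coe_filter_univ, ← sum_measureReal_singleton]
  refine Finset.sum_congr rfl fun s _ => ?_
  simp [measureReal_def, ENNReal.toReal_prod, toReal_toPMF_apply]

end IsDist

section Hoeffding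

variable {Ω ι : Type*} [MeasurableSpace Ω] [Fintype ι] {μ : Measure Ω} [IsProbabilityMeasure μ]
  {f : Ω → ℝ}

lemma hasSubgaussianMGF_comp_eval_sub_integral (hfm : Measurable f)
    (hf : ∀ ω, f ω ∈ Set.Icc (0 : ℝ) 1) (i : ι) :
    HasSubgaussianMGF (fun s : ι → Ω => f (s i) - μ[f]) (1 / 4) (Measure.pi fun _ => μ) := by
  have h := hasSubgaussianMGF_of_mem_Icc hfm.aemeasurable (ae_of_all μ hf)
  refine HasSubgaussianMGF.of_map (X := fun ω => f ω - μ[f]) (Y := fun s : ι → Ω => s i)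
    (measurable_pi_apply i).aemeasurable ?_
  rw [(measurePreserving_eval (fun _ : ι => μ) i).map_eq]
  convert h using 1
  norm_num

lemma measureReal_pi_le_abs_sum_sub_le (hfm : Measurable f) (hf : ∀ ω, f ω ∈ Set.Icc (0 : ℝ) 1)
    (n : ℕ) {ε : ℝ} (hε : 0 ≤ ε) :
    (Measure.pi fun _ : Fin n => μ).real {s | n * ε ≤ |∑ i, f (s i) - n * μ[f]|} ≤
      2 * Real.exp (-(2 * n * ε ^ 2)) := by
  set ν := Measure.pi fun _ : Fin n => μ
  set X : Fin n → (Fin n → Ω) → ℝ := fun i s => f (s i) - μ[f]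
  have hX : iIndepFun X ν := iIndepFun_pi fun _ => (hfm.sub_const _).aemeasurable
  have hsub : ∀ i ∈ Finset.univ, HasSubgaussianMGF (X i) (1 / 4) ν :=
    fun i _ => hasSubgaussianMGF_comp_eval_sub_integral hfm hf i
  have htail : Real.exp (-(n * ε) ^ 2 / (2 * ((∑ _i : Fin n, (1 / 4 : NNReal) : NNReal) : ℝ))) =
      Real.exp (-(2 * n * ε ^ 2)) := by
    rcases n.eq_zero_or_pos with rfl | hn
    · simp
    · congr 1
      simp only [Finset.sum_const, Finset.card_univ, Fintype.card_fin, nsmul_eq_mul]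
      push_cast
      field_simp
      ring
  have hupper := HasSubgaussianMGF.measure_sum_ge_le_of_iIndepFun hX hsub
    (mul_nonneg n.cast_nonneg hε)
  have hlower := HasSubgaussianMGF.measure_sum_ge_le_of_iIndepFun (X := fun i => -X i)
    (hX.comp (fun _ => Neg.neg) fun _ => measurable_neg) (fun i hi => (hsub i hi).neg)
    (mul_nonneg n.cast_nonneg hε)
  rw [htail] at hupper hlower
  have hsum : ∀ s : Fin n → Ω, ∑ i, X i s = ∑ i, f (s i) - n * μ[f] := fun s => by
    simp [X, Finset.sum_sub_distrib]
  calc ν.real {s | n * ε ≤ |∑ i, f (s i) - n * μ[f]|}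
      ≤ ν.real ({s | n * ε ≤ ∑ i, X i s} ∪ {s | n * ε ≤ ∑ i, (-X i) s}) := by
        refine measureReal_mono fun s hs => ?_
        have hs' : n * ε ≤ |∑ i, X i s| := by rwa [hsum]
        simpa [Finset.sum_neg_distrib] using le_abs.mp hs'
    _ ≤ _ := (measureReal_union_le _ _).trans (by linarith)

end Hoeffding

lemma sq_bval_sub_mem_Icc {t : ℝ} (ht : t ∈ Set.Icc (0 : ℝ) 1) (y : Bool) :
    (bval y - t) ^ 2 ∈ Set.Icc (0 : ℝ) 1 := by
  obtain ⟨h0, h1⟩ := ht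
  refine ⟨sq_nonneg _, ?_⟩
  simp only [bval]
  split_ifs <;> nlinarith

lemma two_mul_mul_exp_le_of_log_div_le {k δ ε n : ℝ} (hk : 0 ≤ k) (hδ : 0 < δ) (hε : ε ≠ 0)
    (hn : Real.log (2 * k / δ) / (2 * ε ^ 2) ≤ n) :
    2 * k * Real.exp (-(2 * n * ε ^ 2)) ≤ δ := by
  rcases hk.eq_or_lt with rfl | hk
  · simpa using hδ.le
  have hlog : Real.log (2 * k / δ) ≤ 2 * n * ε ^ 2 := by
    rw [div_le_iff₀ (by positivity)] at hn
    linarith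
  have hexp : 2 * k ≤ Real.exp (2 * n * ε ^ 2) * δ := by
    rw [← div_le_iff₀ hδ]
    exact (Real.log_le_iff_le_exp (by positivity)).1 hlog
  calc 2 * k * Real.exp (-(2 * n * ε ^ 2))
      ≤ Real.exp (2 * n * ε ^ 2) * δ * Real.exp (-(2 * n * ε ^ 2)) := by gcongr
    _ = δ := by rw [mul_right_comm, ← Real.exp_add, add_neg_cancel, Real.exp_zero, one_mul]

lemma pos_of_log_div_le {k δ ε n : ℝ} (hk : 1 ≤ k) (hδ : δ ∈ Set.Ioc (0 : ℝ) 1) (hε : ε ≠ 0)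
    (hn : Real.log (2 * k / δ) / (2 * ε ^ 2) ≤ n) : 0 < n := by
  have hlog : 0 < Real.log (2 * k / δ) := by
    refine Real.log_pos ?_
    rw [lt_div_iff₀ hδ.1]
    linarith [hδ.2]
  exact (div_pos hlog (by positivity)).trans_le hn

lemma le_add_two_mul_sub_of_abs_sub_lt {n Sp Sq Ep Eq ε c : ℝ} (hn : 0 < n)
    (hp : |Sp - n * Ep| < n * ε) (hq : |Sq - n * Eq| < n * ε)
    (h : 1 / n * Sq ≤ 1 / n * Sp - c) : Eq ≤ Ep + 2 * ε - c := by
  have h' : Sq ≤ Sp - n * c := by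
    have := mul_le_mul_of_nonneg_left h hn.le
    rwa [mul_sub, ← mul_assoc, ← mul_assoc, mul_one_div_cancel hn.ne', one_mul, one_mul] at this
  have hp' := (abs_lt.mp hp).2
  have hq' := (abs_lt.mp hq).1
  refine le_of_mul_le_mul_left ?_ hn
  linarith

theorem stmt_13_general [Fintype X]
    (𝒬 : Finset (X → ℝ)) (h𝒬01 : ∀ q ∈ 𝒬, ∀ x, q x ∈ Set.Icc (0 : ℝ) 1)
    (D : X × Bool → ℝ) (hD : IsDist D)
    (ε δ c : ℝ) (hε : 0 < ε) (hδ : δ ∈ Set.Ioc (0 : ℝ) 1)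
    (n : ℕ)
    (hn : Real.log (2 * (𝒬.card : ℝ) / δ) / (2 * ε ^ 2) ≤ (n : ℝ)) :
    1 - δ ≤ iidProb D n (fun s => ∀ p ∈ 𝒬, ∀ q ∈ 𝒬,
      (1 / (n : ℝ)) * ∑ i, (bval (s i).2 - q (s i).1) ^ 2 ≤
          (1 / (n : ℝ)) * ∑ i, (bval (s i).2 - p (s i).1) ^ 2 - c →
        ∑ z : X × Bool, D z * (bval z.2 - q z.1) ^ 2 ≤
          ∑ z : X × Bool, D z * (bval z.2 - p z.1) ^ 2 + 2 * ε - c) := by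
  let _ : MeasurableSpace X := ⊤
  set ν := Measure.pi fun _ : Fin n => hD.toPMF.toMeasure
  set Bad : Set (Fin n → X × Bool) := ⋃ q ∈ 𝒬, {s | n * ε ≤
    |∑ i, (bval (s i).2 - q (s i).1) ^ 2 - n * ∑ z, D z * (bval z.2 - q z.1) ^ 2|}
  have hBad : ν.real Bad ≤ δ := calc
    ν.real Bad ≤ ∑ _q ∈ 𝒬, 2 * Real.exp (-(2 * n * ε ^ 2)) := by
      refine (measureReal_biUnion_finset_le _ _).trans (Finset.sum_le_sum fun q hq => ?_)
      have h := measureReal_pi_le_abs_sum_sub_le (μ := hD.toPMF.toMeasure)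
        (f := fun z : X × Bool => (bval z.2 - q z.1) ^ 2) (measurable_of_finite _)
        (fun z => sq_bval_sub_mem_Icc (h𝒬01 q hq z.1) z.2) n hε.le
      rwa [hD.integral_toMeasure] at h
    _ = 2 * 𝒬.card * Real.exp (-(2 * n * ε ^ 2)) := by
      simp only [Finset.sum_const, nsmul_eq_mul]
      ring
    _ ≤ δ := two_mul_mul_exp_le_of_log_div_le (Nat.cast_nonneg _) hδ.1 hε.ne' hn
  rw [hD.iidProb_eq_measureReal_pi]
  calc 1 - δ ≤ ν.real Badᶜ := by
        rw [probReal_compl_eq_one_sub (Set.toFinite Bad).measurableSet]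
        linarith
    _ ≤ _ := by
      refine measureReal_mono fun s hs p hp q hq hloss => ?_
      simp only [Bad, Set.mem_compl_iff, Set.mem_iUnion, Set.mem_ofPred_eq, not_exists,
        not_le] at hs
      exact le_add_two_mul_sub_of_abs_sub_lt
        (pos_of_log_div_le (by exact_mod_cast Finset.card_pos.mpr ⟨p, hp⟩) hδ hε.ne' hn)
        (hs p hp) (hs q hq) hloss

/-- Generalization of empirical loss decrease.
If `n ≥ log(2|𝒬|/δ)/(2ε²)`, then with probability at least `1 − δ` over `n` i.i.d. draws from
`D`, for all `p, q ∈ 𝒬`: if the empirical squared loss of `q` is at most that of `p` minus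
`c`, then the population squared loss of `q` is at most that of `p` plus `2ε − c`.
(In particular, with `c = k·ε²`, the post-processed predictor `p_k` obtained after `k`
iterations of multiaccuracy boost satisfies
`E_D[(y − p_k(x))²] ≤ E_D[(y − p(x))²] + 2ε − k·ε²`.) -/
theorem stmt_13 [Fintype X] [Nonempty X]
    (𝒬 : Finset (X → ℝ)) (h𝒬01 : ∀ q ∈ 𝒬, ∀ x, q x ∈ Set.Icc (0 : ℝ) 1)
    (D : X × Bool → ℝ) (hD : IsDist D)
    (ε δ c : ℝ) (hε : 0 < ε) (hδ : δ ∈ Set.Ioc (0 : ℝ) 1) (hc : 0 ≤ c)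
    (n : ℕ)
    (hn : Real.log (2 * (𝒬.card : ℝ) / δ) / (2 * ε ^ 2) ≤ (n : ℝ)) :
    1 - δ ≤ iidProb D n (fun s => ∀ p ∈ 𝒬, ∀ q ∈ 𝒬,
      (1 / (n : ℝ)) * ∑ i, (bval (s i).2 - q (s i).1) ^ 2 ≤
          (1 / (n : ℝ)) * ∑ i, (bval (s i).2 - p (s i).1) ^ 2 - c →
        ∑ z : X × Bool, D z * (bval z.2 - q z.1) ^ 2 ≤
          ∑ z : X × Bool, D z * (bval z.2 - p z.1) ^ 2 + 2 * ε - c) :=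
  stmt_13_general 𝒬 h𝒬01 D hD ε δ c hε hδ n hn
end
end
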